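/- Let 0 < α < 1, λ > 0, h(x,α) = 0 for |x| < α and 1 for α ≤ |x| ≤ 1. If u is a positive solution of u'' + λ h(x,α) e^u = 0 on (-1,1) with u(-1) = u(1) = 0, then Λ(‖u‖_∞) ≤ λ < 4·Λ(‖u‖_∞), where Λ(β) = (1-α)^{-2} e^{-β} η(β)² and η(β) = √2·arctanh(√(1-e^{-β})). -/

import Mathlib

open Set

noncomputable def artanh (x : ℝ) : ℝ := (1 / 2) * Real.log ((1 + x) / (1 - x))

noncomputable def eta (β : ℝ) : ℝ := Real.sqrt 2 * artanh (Real.sqrt (1 - Real.exp (-β)))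

noncomputable def Lam (α β : ℝ) : ℝ := (1 - α) ^ (-2 : ℤ) * Real.exp (-β) * (eta β) ^ 2

noncomputable def step (α x : ℝ) : ℝ := if |x| < α then 0 else 1

/-- `u ∈ C²([-1,1]∖{-α,α}) ∩ C¹[-1,1]`, `u(±1)=0`, solving `u'' + lam·h(x,α)eᵘ = 0`
off `±α`. -/
def IsSolution (α lam : ℝ) (u : ℝ → ℝ) : Prop :=
  ContinuousOn u (Icc (-1) 1) ∧
  (∀ x ∈ Ioo (-1 : ℝ) 1, DifferentiableAt ℝ u x) ∧
  ContinuousOn (deriv u) (Icc (-1) 1) ∧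
  (∀ x ∈ Ioo (-1 : ℝ) 1 \ {-α, α}, DifferentiableAt ℝ (deriv u) x ∧
    deriv (deriv u) x + lam * step α x * Real.exp (u x) = 0) ∧
  u (-1) = 0 ∧ u 1 = 0

/-!
Where `h = 0` the solution is affine, and where `h = 1` the first integral `u'² + 2λeᵘ` is
constant. Let `b` be a maximum point of `u`, so `u(b) = M`, `u'(b) = 0`, and (up to the mirror
image) `α ≤ b < 1`. On `[α, 1]` the quantity `θ(u) = artanh √(1 - e^{u - M})` then moves at the
constant speed `k = √(λeᴹ/2)` away from `b`, so `θ(u(1)) = k(1 - b)` and `θ(u(α)) = k(b - α)`.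
As `η(M) = √2 θ(0)`, the first identity reads `λ (1 - b)² = Λ(M) (1 - α)²`; and `u(α) > 0 = u(1)`
gives `b - α < 1 - b`, that is `1 - α < 2 (1 - b)`, while `1 - b ≤ 1 - α` trivially.
-/

open Real hiding artanh

lemma artanh_eq_real_artanh {x : ℝ} (hx : x ∈ Icc (-1 : ℝ) 1) : artanh x = Real.artanh x :=
  (Real.artanh_eq_half_log hx).symm

lemma hasDerivAt_artanh {x : ℝ} (hx : x ∈ Ioo (-1 : ℝ) 1) :
    HasDerivAt artanh (1 / (1 - x ^ 2)) x := by
  obtain ⟨h₁, h₂⟩ := hx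
  have h₁' : 1 + x ≠ 0 := by linarith
  have h₂' : 1 - x ≠ 0 := by linarith
  have hq : HasDerivAt (fun y => (1 + y) / (1 - y)) (2 / (1 - x) ^ 2) x :=
    (((hasDerivAt_id x).const_add 1).div ((hasDerivAt_id x).const_sub 1) h₂').congr_deriv
      (by simp only [id]; field_simp; ring)
  refine ((hq.log (div_ne_zero h₁' h₂')).const_mul (1 / 2)).congr_deriv ?_
  rw [show 1 - x ^ 2 = (1 + x) * (1 - x) by ring]
  field_simp

/-- The solution of `u'' = -λeᵘ` with `u(b) = M`, `u'(b) = 0` is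
`u z = M - 2 log cosh (√(λeᴹ/2) (z - b))`, and `θ ↦ M - 2 log cosh θ` is inverted on `θ ≥ 0`
by `y ↦ theta M y`. -/
noncomputable def theta (M y : ℝ) : ℝ := artanh √(1 - exp (y - M))

lemma theta_self (M : ℝ) : theta M M = 0 := by simp [theta, artanh]

lemma eta_eq_sqrt_two_mul_theta (β : ℝ) : eta β = √2 * theta β 0 := by simp [eta, theta]

lemma sqrt_one_sub_exp_mem_Ico (x : ℝ) : √(1 - exp x) ∈ Ico 0 1 :=
  ⟨sqrt_nonneg _, (sqrt_lt' one_pos).2 (by linarith [exp_pos x])⟩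

lemma hasDerivAt_artanh_sqrt_one_sub_exp (x : ℝ) :
    HasDerivAt artanh (1 / (1 - √(1 - exp x) ^ 2)) √(1 - exp x) :=
  have hmem := sqrt_one_sub_exp_mem_Ico x
  hasDerivAt_artanh ⟨by linarith [hmem.1], hmem.2⟩

lemma hasDerivAt_theta {M y : ℝ} (h : y < M) :
    HasDerivAt (theta M) (-1 / (2 * √(1 - exp (y - M)))) y := by
  have hs : 0 < 1 - exp (y - M) := by linarith [Real.exp_lt_one_iff.2 (sub_neg.2 h)]
  refine ((hasDerivAt_artanh_sqrt_one_sub_exp (y - M)).comp y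
    ((((hasDerivAt_id y).sub_const M).exp.const_sub 1).sqrt hs.ne')).congr_deriv ?_
  simp only [id]
  rw [sq_sqrt hs.le]
  field_simp
  ring

lemma continuous_theta (M : ℝ) : Continuous (theta M) :=
  continuous_iff_continuousAt.2 fun y =>
    (hasDerivAt_artanh_sqrt_one_sub_exp (y - M)).continuousAt.comp
      (f := fun y => √(1 - exp (y - M))) (by fun_prop)

lemma strictAntiOn_theta (M : ℝ) : StrictAntiOn (theta M) (Iic M) := by
  intro y hy z hz hyz
  have hy' := sqrt_one_sub_exp_mem_Ico (y - M)
  have hz' := sqrt_one_sub_exp_mem_Ico (z - M)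
  rw [theta, theta, artanh_eq_real_artanh ⟨by linarith [hy'.1], hy'.2.le⟩,
    artanh_eq_real_artanh ⟨by linarith [hz'.1], hz'.2.le⟩]
  refine Real.artanh_lt_artanh (by linarith [hz'.1]) hy'.2 (sqrt_lt_sqrt ?_ ?_)
  · linarith [exp_le_one_iff.2 (sub_nonpos.2 (show z ≤ M from hz))]
  · linarith [exp_lt_exp.2 (sub_lt_sub_right hyz M)]

lemma sub_eq_mul_sub_of_hasDerivAt {f : ℝ → ℝ} {k a b : ℝ} (hab : a ≤ b)
    (hf : ContinuousOn f (Icc a b)) (hf' : ∀ x ∈ Ioo a b, HasDerivAt f k x) :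
    f b - f a = k * (b - a) := by
  rcases hab.eq_or_lt with rfl | hab
  · simp
  obtain ⟨c, -, hc⟩ := exists_hasDerivAt_eq_slope f (fun _ => k) hab hf hf'
  rw [hc, div_mul_cancel₀ _ (sub_ne_zero.2 hab.ne')]

structure BratuOn (lam : ℝ) (u u' : ℝ → ℝ) (a c : ℝ) : Prop where
  continuousOn : ContinuousOn u (Icc a c)
  continuousOn_deriv : ContinuousOn u' (Icc a c)
  hasDerivAt : ∀ z ∈ Ioo a c, HasDerivAt u (u' z) z
  hasDerivAt_deriv : ∀ z ∈ Ioo a c, HasDerivAt u' (-(lam * exp (u z))) z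

namespace BratuOn

variable {lam a c : ℝ} {u u' : ℝ → ℝ}

lemma comp_const_sub (h : BratuOn lam u u' a c) (s : ℝ) :
    BratuOn lam (fun z => u (s - z)) (fun z => -u' (s - z)) (s - c) (s - a) := by
  have hmaps : MapsTo (s - ·) (Icc (s - c) (s - a)) (Icc a c) := fun z hz =>
    ⟨by linarith [hz.2], by linarith [hz.1]⟩
  have hmem : ∀ z ∈ Ioo (s - c) (s - a), s - z ∈ Ioo a c := fun z hz =>
    ⟨by linarith [hz.2], by linarith [hz.1]⟩
  refine ⟨h.continuousOn.comp (by fun_prop) hmaps,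
    (h.continuousOn_deriv.comp (by fun_prop) hmaps).neg, fun z hz => ?_, fun z hz => ?_⟩
  · exact (h.hasDerivAt _ (hmem z hz)).comp_const_sub s z
  · simpa using ((h.hasDerivAt_deriv _ (hmem z hz)).comp_const_sub s z).fun_neg

lemma energy_eq (h : BratuOn lam u u' a c) {z : ℝ} (hz : z ∈ Icc a c) :
    u' z ^ 2 + 2 * lam * exp (u z) = u' a ^ 2 + 2 * lam * exp (u a) := by
  have hE := sub_eq_mul_sub_of_hasDerivAt (f := fun z => u' z ^ 2 + 2 * lam * exp (u z)) (k := 0)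
    hz.1 (((h.continuousOn_deriv.pow 2).add (continuousOn_const.mul h.continuousOn.rexp)).mono
      (Icc_subset_Icc_right hz.2)) fun x hx => by
    have hx' : x ∈ Ioo a c := ⟨hx.1, hx.2.trans_le hz.2⟩
    refine (((h.hasDerivAt_deriv x hx').pow 2).add
      ((h.hasDerivAt x hx').exp.const_mul (2 * lam))).congr_deriv ?_
    ring
  linarith

lemma theta_eq_of_critical_left (h : BratuOn lam u u' a c) (hlam : 0 < lam) (ha : u' a = 0)
    {z : ℝ} (hz : z ∈ Icc a c) :
    theta (u a) (u z) = √(lam * exp (u a) / 2) * (z - a) := by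
  set M := u a
  set k := √(lam * exp M / 2)
  have hu'_anti : StrictAntiOn u' (Icc a c) :=
    strictAntiOn_of_hasDerivWithinAt_neg (convex_Icc a c) h.continuousOn_deriv
      (by rw [interior_Icc]; exact fun x hx => (h.hasDerivAt_deriv x hx).hasDerivWithinAt)
      fun x _ => neg_neg_of_pos (mul_pos hlam (exp_pos _))
  have hu'_neg : ∀ x ∈ Ioc a c, u' x < 0 := fun x hx =>
    ha ▸ hu'_anti (left_mem_Icc.2 (hx.1.le.trans hx.2)) (Ioc_subset_Icc_self hx) hx.1
  have hu_anti : StrictAntiOn u (Icc a c) :=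
    strictAntiOn_of_hasDerivWithinAt_neg (convex_Icc a c) h.continuousOn
      (by rw [interior_Icc]; exact fun x hx => (h.hasDerivAt x hx).hasDerivWithinAt)
      (by rw [interior_Icc]; exact fun x hx => hu'_neg x (Ioo_subset_Ioc_self hx))
  have hderiv : ∀ x ∈ Ioo a z, HasDerivAt (fun x => theta M (u x)) k x := by
    intro x hx
    have hx' : x ∈ Ioo a c := ⟨hx.1, hx.2.trans_le hz.2⟩
    have hxM : u x < M :=
      hu_anti (left_mem_Icc.2 (hz.1.trans hz.2)) (Ioo_subset_Icc_self hx') hx.1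
    have hs : 0 < 1 - exp (u x - M) := by linarith [Real.exp_lt_one_iff.2 (sub_neg.2 hxM)]
    have hu'x : -u' x = 2 * k * √(1 - exp (u x - M)) := by
      refine (pow_left_inj₀ (neg_nonneg.2 (hu'_neg x (Ioo_subset_Ioc_self hx')).le)
        (by positivity) two_ne_zero).1 ?_
      have hE := h.energy_eq (Ioo_subset_Icc_self hx')
      rw [ha] at hE
      rw [mul_pow, mul_pow, sq_sqrt (by positivity), sq_sqrt hs.le, exp_sub]
      field_simp
      linarith
    refine ((hasDerivAt_theta hxM).comp x (h.hasDerivAt x hx')).congr_deriv ?_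
    rw [← neg_neg (u' x), hu'x]
    field_simp
  have := sub_eq_mul_sub_of_hasDerivAt hz.1 ((continuous_theta M).comp_continuousOn
    (h.continuousOn.mono (Icc_subset_Icc_right hz.2))) hderiv
  rwa [Function.comp_apply, Function.comp_apply, theta_self, sub_zero] at this

lemma theta_eq_of_critical_right (h : BratuOn lam u u' a c) (hlam : 0 < lam) (hc : u' c = 0)
    {z : ℝ} (hz : z ∈ Icc a c) :
    theta (u c) (u z) = √(lam * exp (u c) / 2) * (c - z) := by
  have := (h.comp_const_sub 0).theta_eq_of_critical_left hlam (by simp [hc])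
    (z := -z) ⟨by linarith [hz.2], by linarith [hz.1]⟩
  simp only [zero_sub, neg_neg] at this
  rw [this]
  ring

end BratuOn

namespace IsSolution

variable {α lam : ℝ} {u : ℝ → ℝ}

lemma hasDerivAt_deriv (h : IsSolution α lam u) {z : ℝ} (hz : z ∈ Ioo (-1 : ℝ) 1)
    (hzα : |z| ≠ |α|) : HasDerivAt (deriv u) (-(lam * step α z * exp (u z))) z := by
  obtain ⟨hdiff, hode⟩ := h.2.2.2.1 z ⟨hz, by rintro (rfl | rfl) <;> simp at hzα⟩
  rw [← eq_neg_of_add_eq_zero_left hode]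
  exact hdiff.hasDerivAt

lemma bratuOn (h : IsSolution α lam u) (hα : 0 ≤ α) {a c : ℝ} (ha : -1 ≤ a) (hc : c ≤ 1)
    (hac : ∀ z ∈ Ioo a c, α < |z|) : BratuOn lam u (deriv u) a c where
  continuousOn := h.1.mono (Icc_subset_Icc ha hc)
  continuousOn_deriv := h.2.2.1.mono (Icc_subset_Icc ha hc)
  hasDerivAt z hz := (h.2.1 z ⟨ha.trans_lt hz.1, hz.2.trans_le hc⟩).hasDerivAt
  hasDerivAt_deriv z hz := by
    have hzα := hac z hz
    simpa [step, not_lt.2 hzα.le] using h.hasDerivAt_deriv ⟨ha.trans_lt hz.1, hz.2.trans_le hc⟩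
      (by rw [abs_of_nonneg hα]; exact hzα.ne')

lemma deriv_eq_zero_and_eq_of_abs_lt (h : IsSolution α lam u) (hα : α ≤ 1) {b : ℝ}
    (hb : |b| < α) (hb0 : deriv u b = 0) : deriv u α = 0 ∧ u α = u b := by
  obtain ⟨hb₁, hb₂⟩ := abs_lt.1 hb
  have hsub : Icc b α ⊆ Icc (-1) 1 := Icc_subset_Icc (by linarith) hα
  have hflat : ∀ x ∈ Icc b α, deriv u x = 0 := fun x hx => by
    have := sub_eq_mul_sub_of_hasDerivAt hx.1
      (h.2.2.1.mono ((Icc_subset_Icc_right hx.2).trans hsub)) fun y hy => by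
        have hyα : |y| < α := abs_lt.2 ⟨by linarith [hy.1], hy.2.trans_le hx.2⟩
        simpa [step, hyα] using h.hasDerivAt_deriv ⟨by linarith [hy.1], by linarith [hy.2, hx.2]⟩
          (hyα.trans_le (le_abs_self α)).ne
    linarith
  refine ⟨hflat α (right_mem_Icc.2 hb₂.le), ?_⟩
  have := sub_eq_mul_sub_of_hasDerivAt (k := 0) hb₂.le (h.1.mono hsub) fun y hy =>
    hflat y (Ioo_subset_Icc_self hy) ▸ (h.2.1 y ⟨by linarith [hy.1], by linarith [hy.2]⟩).hasDerivAt
  linarith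

lemma nonneg (h : IsSolution α lam u) (hpos : ∀ x ∈ Ioo (-1 : ℝ) 1, 0 < u x) :
    ∀ x ∈ Icc (-1 : ℝ) 1, 0 ≤ u x := by
  intro x hx
  rcases hx.1.eq_or_lt with rfl | h₁
  · exact h.2.2.2.2.1.ge
  rcases hx.2.eq_or_lt with rfl | h₂
  · exact h.2.2.2.2.2.ge
  exact (hpos x ⟨h₁, h₂⟩).le

lemma exists_critical_max (h : IsSolution α lam u) (hα : 0 < α ∧ α < 1)
    (hpos : ∀ x ∈ Ioo (-1 : ℝ) 1, 0 < u x) {M : ℝ}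
    (hM : IsGreatest ((fun x => |u x|) '' Icc (-1 : ℝ) 1) M) :
    ∃ b, (α ≤ b ∧ b < 1 ∨ -1 < b ∧ b ≤ -α) ∧ deriv u b = 0 ∧ u b = M := by
  obtain ⟨b, hb, hmax⟩ := isCompact_Icc.exists_isMaxOn (nonempty_Icc.2 (by norm_num)) h.1
  have hub : 0 < u b :=
    (hpos 0 ⟨by norm_num, by norm_num⟩).trans_le (hmax ⟨by norm_num, by norm_num⟩)
  have hb' : b ∈ Ioo (-1 : ℝ) 1 :=
    ⟨hb.1.lt_of_ne (by rintro rfl; linarith [h.2.2.2.2.1]),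
      hb.2.lt_of_ne (by rintro rfl; linarith [h.2.2.2.2.2])⟩
  have hb0 : deriv u b = 0 := (hmax.isLocalMax (Icc_mem_nhds hb'.1 hb'.2)).deriv_eq_zero
  have hbM : IsGreatest ((fun x => |u x|) '' Icc (-1 : ℝ) 1) (u b) := by
    refine ⟨⟨b, hb, abs_of_pos hub⟩, ?_⟩
    rintro _ ⟨y, hy, rfl⟩
    exact (abs_of_nonneg (h.nonneg hpos y hy)).trans_le (hmax hy)
  rcases le_or_gt α b with hαb | hbα
  · exact ⟨b, Or.inl ⟨hαb, hb'.2⟩, hb0, hbM.unique hM⟩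
  rcases le_or_gt b (-α) with hbα' | hαb
  · exact ⟨b, Or.inr ⟨hb'.1, hbα'⟩, hb0, hbM.unique hM⟩
  obtain ⟨hα0, hαu⟩ := h.deriv_eq_zero_and_eq_of_abs_lt hα.2.le (abs_lt.2 ⟨hαb, hbα⟩) hb0
  exact ⟨α, Or.inl ⟨le_rfl, hα.2⟩, hα0, hαu.trans (hbM.unique hM)⟩

end IsSolution

lemma Lam_bounds_of_theta_eq {α lam M y d₁ d₂ : ℝ} (hlam : 0 < lam) (hy : 0 < y) (hyM : y ≤ M)
    (h₁ : theta M 0 = √(lam * exp M / 2) * d₁) (h₂ : theta M y = √(lam * exp M / 2) * d₂)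
    (hd₂ : 0 ≤ d₂) (hsum : d₁ + d₂ = 1 - α) : Lam α M ≤ lam ∧ lam < 4 * Lam α M := by
  have hk : 0 < √(lam * exp M / 2) := by positivity
  have hd : d₂ < d₁ := by
    have := strictAntiOn_theta M (show (0 : ℝ) ∈ Iic M from hy.le.trans hyM) hyM hy
    rw [h₁, h₂] at this
    exact lt_of_mul_lt_mul_left this hk.le
  have hLam : Lam α M = lam * d₁ ^ 2 / (1 - α) ^ 2 := by
    rw [Lam, eta_eq_sqrt_two_mul_theta, h₁, mul_pow, mul_pow, sq_sqrt zero_le_two,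
      sq_sqrt (by positivity), zpow_neg, zpow_ofNat, exp_neg]
    field_simp
  rw [hLam, ← hsum]
  constructor
  · rw [div_le_iff₀ (by nlinarith)]
    nlinarith [mul_nonneg hlam.le (mul_nonneg hd₂ (by linarith : 0 ≤ 2 * d₁ + d₂))]
  · rw [mul_div_assoc', lt_div_iff₀ (by nlinarith)]
    nlinarith [mul_pos hlam (mul_pos (sub_pos.2 hd) (by linarith : 0 < 3 * d₁ + d₂))]

theorem stmt_13 (α lam M : ℝ) (hα : 0 < α ∧ α < 1) (hlam : 0 < lam) (u : ℝ → ℝ)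
    (hsol : IsSolution α lam u) (hpos : ∀ x ∈ Ioo (-1 : ℝ) 1, 0 < u x)
    (hM : IsGreatest ((fun x => |u x|) '' Icc (-1 : ℝ) 1) M) :
    Lam α M ≤ lam ∧ lam < 4 * Lam α M := by
  have hle : ∀ x ∈ Icc (-1 : ℝ) 1, u x ≤ M := fun x hx =>
    (le_abs_self _).trans (hM.2 ⟨x, hx, rfl⟩)
  obtain ⟨b, ⟨hαb, hb1⟩ | ⟨hb1, hbα⟩, hb0, rfl⟩ := hsol.exists_critical_max hα hpos hM
  · have h₁ := (hsol.bratuOn hα.1.le (by linarith) le_rfl fun z hz =>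
      lt_abs.2 (Or.inl (hαb.trans_lt hz.1))).theta_eq_of_critical_left hlam hb0
      ⟨hb1.le, le_rfl⟩
    have h₂ := (hsol.bratuOn hα.1.le (by linarith) hb1.le fun z hz =>
      lt_abs.2 (Or.inl hz.1)).theta_eq_of_critical_right hlam hb0 ⟨le_rfl, hαb⟩
    rw [hsol.2.2.2.2.2] at h₁
    exact Lam_bounds_of_theta_eq hlam (hpos α ⟨by linarith, hα.2⟩)
      (hle α ⟨by linarith, hα.2.le⟩) h₁ h₂ (by linarith) (by ring)
  · have h₁ := (hsol.bratuOn hα.1.le le_rfl (by linarith) fun z hz =>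
      lt_abs.2 (Or.inr (by linarith [hz.2]))).theta_eq_of_critical_right hlam hb0
      ⟨le_rfl, hb1.le⟩
    have h₂ := (hsol.bratuOn hα.1.le hb1.le (by linarith) fun z hz =>
      lt_abs.2 (Or.inr (by linarith [hz.2]))).theta_eq_of_critical_left hlam hb0 ⟨hbα, le_rfl⟩
    rw [hsol.2.2.2.2.1] at h₁
    exact Lam_bounds_of_theta_eq hlam (hpos (-α) ⟨by linarith, by linarith⟩)
      (hle (-α) ⟨by linarith, by linarith⟩) h₁ h₂ (by linarith) (by ring)
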